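/- Let k be a positive integer and set C(k) = N₄(k) − 192·L₁,₁,₂(k) − 192·L₃(k) − 48·L₂(k) − 96·L₁,₂(k) − 64·L₁,₃(k) − 96·L₂(k/2), where L₂(k/2) is interpreted as 0 when k is odd. If k = m² for some odd positive integer m, then 384·L₄(k) = C(k) − 8; if k = 2m² or k = 4m² for some positive integer m, then 384·L₄(k) = C(k) − 24; if k = 3m² for some positive integer m, then 384·L₄(k) = C(k) − 32. -/

import Mathlib

noncomputable def N4 (k : ℕ) : ℕ := {q : ℤ × ℤ × ℤ × ℤ | q.1 ^ 2 + q.2.1 ^ 2 + q.2.2.1 ^ 2 + q.2.2.2 ^ 2 = (k : ℤ)}.ncard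

noncomputable def L4 (k : ℕ) : ℕ := {q : ℕ × ℕ × ℕ × ℕ | 0 < q.1 ∧ q.1 < q.2.1 ∧ q.2.1 < q.2.2.1 ∧ q.2.2.1 < q.2.2.2 ∧ q.1 ^ 2 + q.2.1 ^ 2 + q.2.2.1 ^ 2 + q.2.2.2 ^ 2 = k}.ncard

noncomputable def L112 (k : ℕ) : ℕ := {t : ℕ × ℕ × ℕ | 0 < t.1 ∧ 0 < t.2.2 ∧ t.1 < t.2.1 ∧ t.1 ≠ t.2.2 ∧ t.2.1 ≠ t.2.2 ∧ t.1 ^ 2 + t.2.1 ^ 2 + 2 * t.2.2 ^ 2 = k}.ncard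

noncomputable def L3 (k : ℕ) : ℕ := {t : ℕ × ℕ × ℕ | 0 < t.1 ∧ t.1 < t.2.1 ∧ t.2.1 < t.2.2 ∧ t.1 ^ 2 + t.2.1 ^ 2 + t.2.2 ^ 2 = k}.ncard

noncomputable def L2 (k : ℕ) : ℕ := {p : ℕ × ℕ | 0 < p.1 ∧ p.1 < p.2 ∧ p.1 ^ 2 + p.2 ^ 2 = k}.ncard

noncomputable def L12 (k : ℕ) : ℕ := {p : ℕ × ℕ | 0 < p.1 ∧ 0 < p.2 ∧ p.1 ≠ p.2 ∧ p.1 ^ 2 + 2 * p.2 ^ 2 = k}.ncard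

noncomputable def L13 (k : ℕ) : ℕ := {p : ℕ × ℕ | 0 < p.1 ∧ 0 < p.2 ∧ p.1 ≠ p.2 ∧ p.1 ^ 2 + 3 * p.2 ^ 2 = k}.ncard

noncomputable def L2half (k : ℕ) : ℕ := if k % 2 = 0 then L2 (k / 2) else 0

noncomputable def C (k : ℕ) : ℤ := N4 k - 192 * L112 k - 192 * L3 k - 48 * L2 k - 96 * L12 k - 64 * L13 k - 96 * L2half k

/-!
Sorting the absolute values of an integer solution of `x² + y² + z² + v² = k` gives a quadruple
`0 ≤ a ≤ b ≤ c ≤ d`, which comes from (number of its distinct rearrangements) · 2^(number of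
nonzero entries) integer solutions. Both factors depend only on the *shape* of the quadruple
(whether `a = 0`, and which neighbours coincide), so `N₄(k)` is a sum over the sixteen shapes of a
weight (384, 192, …, 1) times the number of sorted quadruples of that shape. Each shape class is in
bijection with the solutions counted by one of `L₄, L₁,₁,₂, L₃, L₂, L₁,₂, L₁,₃, L₂(k/2)`, except
the shapes with a single nonzero value, which count the `d > 0` with `r d² = k` for
`r = 1, 2, 3, 4` (weights 8, 24, 32, 16). For `k = m²` (`m` odd), `2m²`, `4m²`, `3m²` comparing
`p`-adic valuations shows which of these counts is `1`: only `r = 1`, only `r = 2`, `r = 1` and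
`r = 4`, only `r = 3`.
-/

open Finset

section CardImage

variable {α β γ : Type*} [DecidableEq β] [DecidableEq γ] {s : Finset α} {a : α → β} {b : α → γ}

lemma card_image_pair_of_eq_imp (hab : ∀ x ∈ s, ∀ y ∈ s, a x = a y → b x = b y) :
    #(s.image fun x => (a x, b x)) = #(s.image a) := by
  rw [← card_image_of_injOn (f := Prod.fst), image_image]
  · rfl
  rintro _ hp _ hq hpq
  obtain ⟨x, hx, rfl⟩ := mem_image.1 (mem_coe.1 hp)
  obtain ⟨y, hy, rfl⟩ := mem_image.1 (mem_coe.1 hq)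
  exact Prod.ext hpq (hab x hx y hy hpq)

lemma card_image_eq_of_eq_iff (hab : ∀ x ∈ s, ∀ y ∈ s, a x = a y ↔ b x = b y) :
    #(s.image a) = #(s.image b) := by
  rw [← card_image_pair_of_eq_imp fun x hx y hy => (hab x hx y hy).1,
    ← card_image_pair_of_eq_imp fun x hx y hy => (hab x hx y hy).2,
    ← card_image_of_injective _ Prod.swap_injective, image_image]
  rfl

end CardImage

noncomputable def intReps (ι : Type*) [Fintype ι] [DecidableEq ι] (k : ℕ) : Finset (ι → ℤ) :=
  {f ∈ Fintype.piFinset fun _ => Icc (-(k : ℤ)) k | ∑ i, f i ^ 2 = k}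

def natReps (ι : Type*) [Fintype ι] [DecidableEq ι] (k : ℕ) : Finset (ι → ℕ) :=
  {g ∈ Fintype.piFinset fun _ => range (k + 1) | ∑ i, g i ^ 2 = k}

section Reps

variable {ι : Type*} [Fintype ι]

def signCount (g : ι → ℕ) : ℕ := ∏ i, if g i = 0 then 1 else 2

def orbitCard [DecidableEq ι] {α : Type*} [DecidableEq α] (h : ι → α) : ℕ :=
  #(univ.image fun σ : Equiv.Perm ι => h ∘ σ)

lemma mem_intReps [DecidableEq ι] {k : ℕ} {f : ι → ℤ} : f ∈ intReps ι k ↔ ∑ i, f i ^ 2 = k := by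
  refine ⟨fun hf => (mem_filter.1 hf).2,
    fun hf => mem_filter.2 ⟨Fintype.mem_piFinset.2 fun i => ?_, hf⟩⟩
  have hi : f i ^ 2 ≤ k := hf ▸ single_le_sum (fun j _ => sq_nonneg (f j)) (mem_univ i)
  rw [mem_Icc]
  constructor <;> nlinarith [Int.le_self_sq (f i), Int.le_self_sq (-f i)]

lemma mem_natReps [DecidableEq ι] {k : ℕ} {g : ι → ℕ} : g ∈ natReps ι k ↔ ∑ i, g i ^ 2 = k := by
  refine ⟨fun hg => (mem_filter.1 hg).2,
    fun hg => mem_filter.2 ⟨Fintype.mem_piFinset.2 fun i => ?_, hg⟩⟩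
  have hi : g i ^ 2 ≤ k := hg ▸ single_le_sum (fun j _ => Nat.zero_le (g j ^ 2)) (mem_univ i)
  rw [mem_range]
  linarith [Nat.le_self_pow two_ne_zero (g i)]

lemma comp_perm_mem_natReps [DecidableEq ι] {k : ℕ} {g : ι → ℕ} (hg : g ∈ natReps ι k)
    (σ : Equiv.Perm ι) : g ∘ σ ∈ natReps ι k := by
  rw [mem_natReps] at hg ⊢
  exact (Equiv.sum_comp σ fun i => g i ^ 2).trans hg

lemma card_intReps [DecidableEq ι] (k : ℕ) : #(intReps ι k) = ∑ g ∈ natReps ι k, signCount g := by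
  have cast_sum : ∀ f : ι → ℤ, ((∑ i, (f i).natAbs ^ 2 : ℕ) : ℤ) = ∑ i, f i ^ 2 := fun f => by
    push_cast; simp only [sq_abs]
  rw [card_eq_sum_card_fiberwise (f := fun f i => (f i).natAbs) (t := natReps ι k)]
  · refine sum_congr rfl fun g hg => ?_
    have fiber : {f ∈ intReps ι k | (fun i => (f i).natAbs) = g}
        = Fintype.piFinset fun i => {(g i : ℤ), -(g i : ℤ)} := by
      ext f
      simp only [mem_filter, Fintype.mem_piFinset, mem_insert, mem_singleton]
      constructor
      · rintro ⟨-, rfl⟩ i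
        exact Int.natAbs_eq (f i)
      · intro hf
        have habs : ∀ i, (f i).natAbs = g i := fun i => by rcases hf i with h | h <;> simp [h]
        refine ⟨?_, funext habs⟩
        rw [mem_intReps, ← cast_sum, ← mem_natReps.1 hg]
        simp only [habs]
    rw [fiber, Fintype.card_piFinset, signCount]
    refine prod_congr rfl fun i _ => ?_
    split_ifs with h
    · simp [h]
    · exact card_pair (by omega)
  · intro f hf
    rw [mem_coe, mem_natReps]
    exact_mod_cast (cast_sum f).trans (mem_intReps.1 hf)

lemma signCount_comp_perm (g : ι → ℕ) (σ : Equiv.Perm ι) : signCount (g ∘ σ) = signCount g :=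
  Equiv.prod_comp σ fun i => if g i = 0 then 1 else 2

lemma signCount_congr {g g' : ι → ℕ} (h : ∀ i, g i = 0 ↔ g' i = 0) :
    signCount g = signCount g' :=
  prod_congr rfl fun i _ => by simp only [h]

lemma orbitCard_congr [DecidableEq ι] {α β : Type*} [DecidableEq α] [DecidableEq β]
    {h : ι → α} {h' : ι → β} (hh : ∀ i j, h i = h j ↔ h' i = h' j) :
    orbitCard h = orbitCard h' :=
  card_image_eq_of_eq_iff fun σ _ τ _ => by simp only [funext_iff, Function.comp_apply, hh]

end Reps

open scoped Classical in
lemma sum_eq_sum_monotone_orbitCard {n : ℕ} {α M : Type*} [LinearOrder α] [AddCommMonoid M]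
    {s : Finset (Fin n → α)} (hs : ∀ g ∈ s, ∀ σ : Equiv.Perm (Fin n), g ∘ σ ∈ s)
    {F : (Fin n → α) → M} (hF : ∀ g (σ : Equiv.Perm (Fin n)), F (g ∘ σ) = F g) :
    ∑ g ∈ s, F g = ∑ h ∈ s with Monotone h, orbitCard h • F h := by
  rw [← sum_fiberwise_of_maps_to (g := fun g => g ∘ Tuple.sort g) (t := {h ∈ s | Monotone h})
    fun g hg => mem_filter.2 ⟨hs g hg _, Tuple.monotone_sort g⟩]
  refine sum_congr rfl fun h hh => ?_
  obtain ⟨hs', hmono⟩ := mem_filter.1 hh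
  have fiber : {g ∈ s | g ∘ Tuple.sort g = h} = univ.image fun σ : Equiv.Perm (Fin n) => h ∘ σ := by
    ext g
    simp only [mem_filter, mem_image, mem_univ, true_and]
    constructor
    · rintro ⟨-, rfl⟩
      exact ⟨(Tuple.sort g)⁻¹, by ext; simp⟩
    · rintro ⟨σ, rfl⟩
      refine ⟨hs h hs' σ, ?_⟩
      rw [Tuple.comp_perm_comp_sort_eq_comp_sort, Tuple.sort_eq_refl_iff_monotone.2 hmono]
      rfl
  rw [orbitCard, ← fiber, ← sum_const]
  exact sum_congr rfl fun g hg => by rw [← (mem_filter.1 hg).2, hF]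

lemma N4_eq_card_intReps (k : ℕ) : N4 k = #(intReps (Fin 4) k) := by
  rw [N4, ← Set.ncard_coe_finset]
  symm
  refine Set.BijOn.ncard_eq (f := fun f => (f 0, f 1, f 2, f 3))
    (Set.InvOn.bijOn (f' := fun q => ![q.1, q.2.1, q.2.2.1, q.2.2.2])
      ⟨fun f _ => by funext i; fin_cases i <;> rfl, fun q _ => rfl⟩ ?_ ?_)
  · intro f hf
    simpa [mem_intReps, Fin.sum_univ_four] using hf
  · intro q hq
    simpa [mem_intReps, Fin.sum_univ_four] using hq

open scoped Classical in
noncomputable def sortedReps (k : ℕ) : Finset (Fin 4 → ℕ) := {h ∈ natReps (Fin 4) k | Monotone h}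

lemma N4_eq_sum_sortedReps (k : ℕ) :
    N4 k = ∑ h ∈ sortedReps k, orbitCard h * signCount h := by
  rw [N4_eq_card_intReps, card_intReps,
    sum_eq_sum_monotone_orbitCard (fun _ hg => comp_perm_mem_natReps hg) signCount_comp_perm]
  rfl

lemma monotone_fin_four_iff {α : Type*} [Preorder α] {h : Fin 4 → α} :
    Monotone h ↔ h 0 ≤ h 1 ∧ h 1 ≤ h 2 ∧ h 2 ≤ h 3 := by
  simp [Fin.monotone_iff_le_succ, Fin.forall_fin_succ]

lemma vec_mem_sortedReps {k a b c d : ℕ} :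
    ![a, b, c, d] ∈ sortedReps k ↔ (a ≤ b ∧ b ≤ c ∧ c ≤ d) ∧ a ^ 2 + b ^ 2 + c ^ 2 + d ^ 2 = k := by
  simp [sortedReps, mem_natReps, monotone_fin_four_iff, Fin.sum_univ_four, and_comm]

abbrev Shape := Bool × Bool × Bool × Bool

def shape (h : Fin 4 → ℕ) : Shape := (h 0 == 0, h 0 == h 1, h 1 == h 2, h 2 == h 3)

lemma shape_vec (a b c d : ℕ) : shape ![a, b, c, d] = (a == 0, a == b, b == c, c == d) := rfl

def Shape.rep : Shape → Fin 4 → ℕ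
  | (z, e₁, e₂, e₃) =>
    let a := if z then 0 else 1
    let b := if e₁ then a else a + 1
    let c := if e₂ then b else b + 1
    ![a, b, c, if e₃ then c else c + 1]

lemma Shape.monotone_rep (s : Shape) : Monotone s.rep := by
  rw [monotone_fin_four_iff]
  revert s
  decide

lemma Shape.shape_rep (s : Shape) : shape s.rep = s := by
  revert s
  decide

lemma eq_iff_eq_of_shape_eq {h h' : Fin 4 → ℕ} (hh : Monotone h) (hh' : Monotone h')
    (hs : shape h = shape h') :
    (∀ i j, h i = h j ↔ h' i = h' j) ∧ ∀ i, h i = 0 ↔ h' i = 0 := by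
  rw [monotone_fin_four_iff] at hh hh'
  simp only [shape, Prod.mk.injEq] at hs
  obtain ⟨h0, h1, h2, h3⟩ := hs
  rw [Bool.eq_iff_iff, beq_iff_eq, beq_iff_eq] at h0 h1 h2 h3
  refine ⟨fun i j => ?_, fun i => ?_⟩
  · fin_cases i <;> fin_cases j <;> simp only [Fin.zero_eta, Fin.mk_one, Fin.reduceFinMk] <;> omega
  · fin_cases i <;> simp only [Fin.zero_eta, Fin.mk_one, Fin.reduceFinMk] <;> omega

def Shape.weight (s : Shape) : ℕ := orbitCard s.rep * signCount s.rep

lemma Shape.weight_values :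
    Shape.weight (false, false, false, false) = 384 ∧
    Shape.weight (false, true, false, false) = 192 ∧
    Shape.weight (false, false, true, false) = 192 ∧
    Shape.weight (false, false, false, true) = 192 ∧
    Shape.weight (false, true, true, false) = 64 ∧ Shape.weight (false, false, true, true) = 64 ∧
    Shape.weight (false, true, false, true) = 96 ∧ Shape.weight (false, true, true, true) = 16 ∧
    Shape.weight (true, false, false, false) = 192 ∧ Shape.weight (true, true, false, false) = 48 ∧
    Shape.weight (true, false, true, false) = 96 ∧ Shape.weight (true, false, false, true) = 96 ∧
    Shape.weight (true, true, true, false) = 8 ∧ Shape.weight (true, true, false, true) = 24 ∧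
    Shape.weight (true, false, true, true) = 32 ∧ Shape.weight (true, true, true, true) = 1 := by
  decide

lemma orbitCard_mul_signCount_eq_weight {h : Fin 4 → ℕ} (hh : Monotone h) :
    orbitCard h * signCount h = (shape h).weight := by
  obtain ⟨heq, hzero⟩ :=
    eq_iff_eq_of_shape_eq hh (shape h).monotone_rep ((shape h).shape_rep).symm
  rw [Shape.weight, orbitCard_congr heq, signCount_congr hzero]

noncomputable def shapeCount (k : ℕ) (S : Finset Shape) : ℕ := #{h ∈ sortedReps k | shape h ∈ S}

lemma shapeCount_eq_sum (k : ℕ) (S : Finset Shape) :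
    shapeCount k S = ∑ s ∈ S, shapeCount k {s} := by
  simp only [shapeCount, mem_singleton]
  exact (sum_card_fiberwise_eq_card_filter _ _ _).symm

lemma N4_eq_sum_weight_mul_shapeCount (k : ℕ) :
    N4 k = ∑ s, s.weight * shapeCount k {s} := by
  rw [N4_eq_sum_sortedReps, ← sum_fiberwise (g := shape)]
  refine sum_congr rfl fun s _ => ?_
  rw [shapeCount, card_eq_sum_ones, mul_sum, mul_one]
  refine sum_congr (by simp) fun h hh => ?_
  obtain ⟨hh, hs⟩ := mem_filter.1 hh
  rw [← mem_singleton.1 hs]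
  exact orbitCard_mul_signCount_eq_weight (mem_filter.1 hh).2

lemma fin_four_eta {α : Type*} (h : Fin 4 → α) : ![h 0, h 1, h 2, h 3] = h := by
  funext i; fin_cases i <;> rfl

-- `F` takes the four entries rather than the vector: a case split inside `F` on entries of a
-- vector `![a, b, c, d]` would carry decidability instances that `simp` cannot rewrite.
lemma shapeCount_eq_ncard {β : Type*} {k : ℕ} {S : Finset Shape} {t : Set β}
    (F : ℕ → ℕ → ℕ → ℕ → β) (g : β → Fin 4 → ℕ)
    (hF : ∀ a b c d, ![a, b, c, d] ∈ sortedReps k → shape ![a, b, c, d] ∈ S →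
      F a b c d ∈ t ∧ g (F a b c d) = ![a, b, c, d])
    (hg : ∀ x ∈ t, g x ∈ sortedReps k ∧ shape (g x) ∈ S ∧ F (g x 0) (g x 1) (g x 2) (g x 3) = x) :
    shapeCount k S = t.ncard := by
  have hF' : ∀ h ∈ sortedReps k, shape h ∈ S →
      F (h 0) (h 1) (h 2) (h 3) ∈ t ∧ g (F (h 0) (h 1) (h 2) (h 3)) = h := fun h => by
    rw [← fin_four_eta h]; exact hF _ _ _ _
  rw [shapeCount, ← Set.ncard_coe_finset]
  refine Set.BijOn.ncard_eq (f := fun h => F (h 0) (h 1) (h 2) (h 3))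
    (Set.InvOn.bijOn (f' := g) ⟨fun h hh => ?_, fun x hx => (hg x hx).2.2⟩
    (fun h hh => ?_) fun x hx => mem_filter.2 ⟨(hg x hx).1, (hg x hx).2.1⟩)
  · exact (hF' h (mem_filter.1 hh).1 (mem_filter.1 hh).2).2
  · exact (hF' h (mem_filter.1 hh).1 (mem_filter.1 hh).2).1

lemma shapeCount_eq_zero {k : ℕ} {S : Finset Shape}
    (h : ∀ a b c d, ![a, b, c, d] ∈ sortedReps k → shape ![a, b, c, d] ∉ S) :
    shapeCount k S = 0 := by
  rw [shapeCount, card_eq_zero, filter_eq_empty_iff]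
  intro x hx
  rw [← fin_four_eta x] at hx ⊢
  exact h _ _ _ _ hx

lemma L4_eq_shapeCount (k : ℕ) : L4 k = shapeCount k {(false, false, false, false)} := by
  refine (shapeCount_eq_ncard (fun a b c d => (a, b, c, d))
    (fun q => ![q.1, q.2.1, q.2.2.1, q.2.2.2]) ?_ ?_).symm
  · intro a b c d hr hs
    simp only [vec_mem_sortedReps, shape_vec, mem_singleton, Prod.mk.injEq,
      beq_eq_false_iff_ne] at hr hs
    simp only [Set.mem_ofPred_eq, and_true]
    omega
  · rintro ⟨x, y, z, v⟩ hq
    simp only [Set.mem_ofPred_eq] at hq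
    simp only [vec_mem_sortedReps, shape_vec, mem_singleton, Prod.mk.injEq, beq_eq_false_iff_ne,
      Matrix.cons_val, and_true]
    omega

lemma L112_eq_shapeCount (k : ℕ) :
    L112 k = shapeCount k
      {(false, true, false, false), (false, false, true, false), (false, false, false, true)} := by
  refine (shapeCount_eq_ncard
    (fun a b c d => if a = b then (c, d, a) else if b = c then (a, d, b) else (a, b, c))
    (fun t => if t.2.2 < t.1 then ![t.2.2, t.2.2, t.1, t.2.1]
      else if t.2.2 < t.2.1 then ![t.1, t.2.2, t.2.2, t.2.1] else ![t.1, t.2.1, t.2.2, t.2.2])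
    ?_ ?_).symm
  · intro a b c d hr hs
    simp only [vec_mem_sortedReps, shape_vec, mem_insert, mem_singleton, Prod.mk.injEq,
      beq_iff_eq, beq_eq_false_iff_ne] at hr hs
    rcases hs with ⟨h0, rfl, h12, h23⟩ | ⟨h0, h01, rfl, h23⟩ | ⟨h0, h01, h12, rfl⟩
    all_goals simp (disch := omega) only [↓reduceIte, if_pos, if_neg, Set.mem_ofPred_eq, and_true]
    all_goals omega
  · rintro ⟨x, y, z⟩ hq
    simp only [Set.mem_ofPred_eq] at hq
    obtain h | h | h : z < x ∨ x < z ∧ z < y ∨ y < z := by omega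
    all_goals simp (disch := omega) only [if_pos, if_neg, Matrix.cons_val]
    all_goals simp only [vec_mem_sortedReps, shape_vec, mem_insert, mem_singleton, Prod.mk.injEq,
      beq_iff_eq, beq_eq_false_iff_ne, ↓reduceIte, true_and, and_true]
    all_goals omega

lemma L3_eq_shapeCount (k : ℕ) : L3 k = shapeCount k {(true, false, false, false)} := by
  refine (shapeCount_eq_ncard (fun _ b c d => (b, c, d)) (fun t => ![0, t.1, t.2.1, t.2.2])
    ?_ ?_).symm
  · intro a b c d hr hs
    simp only [vec_mem_sortedReps, shape_vec, mem_singleton, Prod.mk.injEq, beq_iff_eq,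
      beq_eq_false_iff_ne] at hr hs
    obtain ⟨rfl, h01, h12, h23⟩ := hs
    simp only [Set.mem_ofPred_eq, and_true]
    omega
  · rintro ⟨x, y, z⟩ hq
    simp only [Set.mem_ofPred_eq] at hq
    simp only [vec_mem_sortedReps, shape_vec, mem_singleton, Prod.mk.injEq, beq_iff_eq,
      beq_eq_false_iff_ne, Matrix.cons_val, zero_pow two_ne_zero, true_and, and_true]
    omega

lemma L2_eq_shapeCount (k : ℕ) : L2 k = shapeCount k {(true, true, false, false)} := by
  refine (shapeCount_eq_ncard (fun _ _ c d => (c, d)) (fun p => ![0, 0, p.1, p.2]) ?_ ?_).symm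
  · intro a b c d hr hs
    simp only [vec_mem_sortedReps, shape_vec, mem_singleton, Prod.mk.injEq, beq_iff_eq,
      beq_eq_false_iff_ne] at hr hs
    obtain ⟨rfl, rfl, h12, h23⟩ := hs
    simp only [Set.mem_ofPred_eq, and_true]
    omega
  · rintro ⟨x, y⟩ hq
    simp only [Set.mem_ofPred_eq] at hq
    simp only [vec_mem_sortedReps, shape_vec, mem_singleton, Prod.mk.injEq, beq_iff_eq,
      beq_eq_false_iff_ne, Matrix.cons_val, zero_pow two_ne_zero, true_and, and_true]
    omega

lemma L12_eq_shapeCount (k : ℕ) :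
    L12 k = shapeCount k {(true, false, false, true), (true, false, true, false)} := by
  refine (shapeCount_eq_ncard (fun _ b c d => if c = d then (b, c) else (d, b))
    (fun p => if p.1 < p.2 then ![0, p.1, p.2, p.2] else ![0, p.2, p.2, p.1]) ?_ ?_).symm
  · intro a b c d hr hs
    simp only [vec_mem_sortedReps, shape_vec, mem_insert, mem_singleton, Prod.mk.injEq,
      beq_iff_eq, beq_eq_false_iff_ne] at hr hs
    rcases hs with ⟨rfl, h01, h12, rfl⟩ | ⟨rfl, h01, rfl, h23⟩
    all_goals simp (disch := omega) only [↓reduceIte, if_pos, if_neg, Set.mem_ofPred_eq, and_true]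
    all_goals omega
  · rintro ⟨x, y⟩ hq
    simp only [Set.mem_ofPred_eq] at hq
    obtain h | h : x < y ∨ y < x := by omega
    all_goals simp (disch := omega) only [if_pos, if_neg, Matrix.cons_val]
    all_goals simp only [vec_mem_sortedReps, shape_vec, mem_insert, mem_singleton, Prod.mk.injEq,
      beq_iff_eq, beq_eq_false_iff_ne, ↓reduceIte, true_and, and_true]
    all_goals omega

lemma L13_eq_shapeCount (k : ℕ) :
    L13 k = shapeCount k {(false, false, true, true), (false, true, true, false)} := by
  refine (shapeCount_eq_ncard (fun a b _ d => if a = b then (d, a) else (a, b))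
    (fun p => if p.1 < p.2 then ![p.1, p.2, p.2, p.2] else ![p.2, p.2, p.2, p.1]) ?_ ?_).symm
  · intro a b c d hr hs
    simp only [vec_mem_sortedReps, shape_vec, mem_insert, mem_singleton, Prod.mk.injEq,
      beq_iff_eq, beq_eq_false_iff_ne] at hr hs
    rcases hs with ⟨h0, h01, rfl, rfl⟩ | ⟨h0, rfl, rfl, h23⟩
    all_goals simp (disch := omega) only [↓reduceIte, if_pos, if_neg, Set.mem_ofPred_eq, and_true]
    all_goals omega
  · rintro ⟨x, y⟩ hq
    simp only [Set.mem_ofPred_eq] at hq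
    obtain h | h : x < y ∨ y < x := by omega
    all_goals simp (disch := omega) only [if_pos, if_neg, Matrix.cons_val]
    all_goals simp only [vec_mem_sortedReps, shape_vec, mem_insert, mem_singleton, Prod.mk.injEq,
      beq_iff_eq, beq_eq_false_iff_ne, ↓reduceIte, true_and, and_true]
    all_goals omega

lemma L2half_eq_shapeCount (k : ℕ) : L2half k = shapeCount k {(false, true, false, true)} := by
  rw [L2half]
  split_ifs with hk
  · refine (shapeCount_eq_ncard (fun a _ c _ => (a, c)) (fun p => ![p.1, p.1, p.2, p.2]) ?_ ?_).symm
    · intro a b c d hr hs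
      simp only [vec_mem_sortedReps, shape_vec, mem_singleton, Prod.mk.injEq, beq_iff_eq,
        beq_eq_false_iff_ne] at hr hs
      obtain ⟨h0, rfl, h12, rfl⟩ := hs
      simp only [Set.mem_ofPred_eq, and_true]
      omega
    · rintro ⟨x, y⟩ hq
      simp only [Set.mem_ofPred_eq] at hq
      simp only [vec_mem_sortedReps, shape_vec, mem_singleton, Prod.mk.injEq, beq_iff_eq,
        beq_eq_false_iff_ne, Matrix.cons_val, true_and, and_true]
      omega
  · refine (shapeCount_eq_zero fun a b c d hr hs => ?_).symm
    simp only [vec_mem_sortedReps, shape_vec, mem_singleton, Prod.mk.injEq, beq_iff_eq,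
      beq_eq_false_iff_ne] at hr hs
    obtain ⟨h0, rfl, h12, rfl⟩ := hs
    omega

lemma shapeCount_all_zero {k : ℕ} (hk : 0 < k) : shapeCount k {(true, true, true, true)} = 0 := by
  refine shapeCount_eq_zero fun a b c d hr hs => ?_
  simp only [vec_mem_sortedReps, shape_vec, mem_singleton, Prod.mk.injEq, beq_iff_eq] at hr hs
  obtain ⟨rfl, rfl, rfl, rfl⟩ := hs
  omega

noncomputable def sqCount (r k : ℕ) : ℕ := {d : ℕ | 0 < d ∧ r * d ^ 2 = k}.ncard

lemma sqCount_one_eq_shapeCount (k : ℕ) :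
    sqCount 1 k = shapeCount k {(true, true, true, false)} := by
  refine (shapeCount_eq_ncard (fun _ _ _ d => d) (fun d => ![0, 0, 0, d]) ?_ ?_).symm
  · intro a b c d hr hs
    simp only [vec_mem_sortedReps, shape_vec, mem_singleton, Prod.mk.injEq, beq_iff_eq,
      beq_eq_false_iff_ne] at hr hs
    obtain ⟨rfl, rfl, rfl, h23⟩ := hs
    simp only [Set.mem_ofPred_eq, and_true]
    omega
  · intro d hd
    simp only [Set.mem_ofPred_eq] at hd
    simp only [vec_mem_sortedReps, shape_vec, mem_singleton, Prod.mk.injEq, beq_iff_eq,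
      beq_eq_false_iff_ne, Matrix.cons_val, zero_pow two_ne_zero, true_and, and_true]
    omega

lemma sqCount_two_eq_shapeCount (k : ℕ) :
    sqCount 2 k = shapeCount k {(true, true, false, true)} := by
  refine (shapeCount_eq_ncard (fun _ _ _ d => d) (fun d => ![0, 0, d, d]) ?_ ?_).symm
  · intro a b c d hr hs
    simp only [vec_mem_sortedReps, shape_vec, mem_singleton, Prod.mk.injEq, beq_iff_eq,
      beq_eq_false_iff_ne] at hr hs
    obtain ⟨rfl, rfl, h12, rfl⟩ := hs
    simp only [Set.mem_ofPred_eq, and_true]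
    omega
  · intro d hd
    simp only [Set.mem_ofPred_eq] at hd
    simp only [vec_mem_sortedReps, shape_vec, mem_singleton, Prod.mk.injEq, beq_iff_eq,
      beq_eq_false_iff_ne, Matrix.cons_val, zero_pow two_ne_zero, true_and, and_true]
    omega

lemma sqCount_three_eq_shapeCount (k : ℕ) :
    sqCount 3 k = shapeCount k {(true, false, true, true)} := by
  refine (shapeCount_eq_ncard (fun _ _ _ d => d) (fun d => ![0, d, d, d]) ?_ ?_).symm
  · intro a b c d hr hs
    simp only [vec_mem_sortedReps, shape_vec, mem_singleton, Prod.mk.injEq, beq_iff_eq,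
      beq_eq_false_iff_ne] at hr hs
    obtain ⟨rfl, h01, rfl, rfl⟩ := hs
    simp only [Set.mem_ofPred_eq, and_true]
    omega
  · intro d hd
    simp only [Set.mem_ofPred_eq] at hd
    simp only [vec_mem_sortedReps, shape_vec, mem_singleton, Prod.mk.injEq, beq_iff_eq,
      beq_eq_false_iff_ne, Matrix.cons_val, zero_pow two_ne_zero, true_and, and_true]
    omega

lemma sqCount_four_eq_shapeCount (k : ℕ) :
    sqCount 4 k = shapeCount k {(false, true, true, true)} := by
  refine (shapeCount_eq_ncard (fun _ _ _ d => d) (fun d => ![d, d, d, d]) ?_ ?_).symm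
  · intro a b c d hr hs
    simp only [vec_mem_sortedReps, shape_vec, mem_singleton, Prod.mk.injEq, beq_iff_eq,
      beq_eq_false_iff_ne] at hr hs
    obtain ⟨h0, rfl, rfl, rfl⟩ := hs
    simp only [Set.mem_ofPred_eq, and_true]
    omega
  · intro d hd
    simp only [Set.mem_ofPred_eq] at hd
    simp only [vec_mem_sortedReps, shape_vec, mem_singleton, Prod.mk.injEq, beq_iff_eq,
      beq_eq_false_iff_ne, Matrix.cons_val, and_true]
    omega

lemma N4_eq_weighted_counts (k : ℕ) (hk : 0 < k) :
    N4 k = 384 * L4 k + 192 * L112 k + 192 * L3 k + 48 * L2 k + 96 * L12 k + 64 * L13 k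
      + 96 * L2half k + 8 * sqCount 1 k + 24 * sqCount 2 k + 32 * sqCount 3 k
      + 16 * sqCount 4 k := by
  rw [N4_eq_sum_weight_mul_shapeCount, L4_eq_shapeCount, L112_eq_shapeCount, L3_eq_shapeCount,
    L2_eq_shapeCount, L12_eq_shapeCount, L13_eq_shapeCount, L2half_eq_shapeCount,
    sqCount_one_eq_shapeCount, sqCount_two_eq_shapeCount, sqCount_three_eq_shapeCount,
    sqCount_four_eq_shapeCount, shapeCount_eq_sum k {_, _, _}, shapeCount_eq_sum k {_, _},
    shapeCount_eq_sum k {_, _}]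
  simp only [Fintype.sum_prod_type, Fintype.sum_bool, Shape.weight_values, shapeCount_all_zero hk,
    sum_insert, sum_singleton, mem_insert, mem_singleton, Prod.mk.injEq, Bool.true_eq_false,
    Bool.false_eq_true, and_true, and_self, and_false, or_self, not_false_eq_true, mul_zero,
    zero_add]
  ring

lemma L4_eq_C_sub (k : ℕ) (hk : 0 < k) :
    (384 * L4 k : ℤ) = C k - (8 * sqCount 1 k + 24 * sqCount 2 k + 32 * sqCount 3 k
      + 16 * sqCount 4 k) := by
  rw [C, N4_eq_weighted_counts k hk]
  push_cast
  ring

lemma mul_sq_ne_prime_mul_sq {p r d m : ℕ} (hp : p.Prime) (hr : ¬p ∣ r) (hm : m ≠ 0) :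
    r * d ^ 2 ≠ p * m ^ 2 := by
  have := Fact.mk hp
  intro h
  have hr0 : r ≠ 0 := by rintro rfl; exact hr (dvd_zero p)
  have hv := congrArg (padicValNat p) h
  have hd : d ≠ 0 := by rintro rfl; simp [hp.ne_zero, hm] at h
  rw [padicValNat.mul hr0 (pow_ne_zero 2 hd), padicValNat.mul hp.ne_zero (pow_ne_zero 2 hm),
    padicValNat.pow, padicValNat.pow, padicValNat.self hp.one_lt,
    padicValNat.eq_zero_of_not_dvd hr] at hv
  omega

lemma sqCount_eq_zero {r k : ℕ} (h : ∀ d, 0 < d → r * d ^ 2 ≠ k) : sqCount r k = 0 := by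
  have hempty : {d : ℕ | 0 < d ∧ r * d ^ 2 = k} = ∅ :=
    Set.eq_empty_of_forall_notMem fun d hd => h d hd.1 hd.2
  rw [sqCount, hempty, Set.ncard_empty]

lemma sqCount_mul_sq {r m : ℕ} (hr : 0 < r) (hm : 0 < m) : sqCount r (r * m ^ 2) = 1 := by
  rw [sqCount, Set.ncard_eq_one]
  refine ⟨m, Set.ext fun d => ⟨fun hd => ?_, fun hd => ⟨hd ▸ hm, hd ▸ rfl⟩⟩⟩
  exact Nat.pow_left_injective two_ne_zero (Nat.eq_of_mul_eq_mul_left hr hd.2)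

lemma sqCount_at_sq {m : ℕ} (hm : Odd m) :
    sqCount 1 (m ^ 2) = 1 ∧ sqCount 2 (m ^ 2) = 0 ∧ sqCount 3 (m ^ 2) = 0 ∧
      sqCount 4 (m ^ 2) = 0 := by
  have hm0 : m ≠ 0 := by rintro rfl; exact Nat.not_odd_zero hm
  refine ⟨by simpa using sqCount_mul_sq one_pos (Nat.pos_of_ne_zero hm0), ?_, ?_, ?_⟩
  · exact sqCount_eq_zero fun d hd h =>
      mul_sq_ne_prime_mul_sq Nat.prime_two (by norm_num) hd.ne' (by omega : 1 * m ^ 2 = 2 * d ^ 2)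
  · exact sqCount_eq_zero fun d hd h =>
      mul_sq_ne_prime_mul_sq Nat.prime_three (by norm_num) hd.ne' (by omega : 1 * m ^ 2 = 3 * d ^ 2)
  · refine sqCount_eq_zero fun d _ h => ?_
    have : 2 * d = m :=
      Nat.pow_left_injective two_ne_zero (show (2 * d) ^ 2 = m ^ 2 by rw [← h]; ring)
    exact Nat.not_even_iff_odd.2 hm ⟨d, by omega⟩

lemma sqCount_at_two_mul_sq {m : ℕ} (hm : 0 < m) :
    sqCount 1 (2 * m ^ 2) = 0 ∧ sqCount 2 (2 * m ^ 2) = 1 ∧ sqCount 3 (2 * m ^ 2) = 0 ∧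
      sqCount 4 (2 * m ^ 2) = 0 := by
  refine ⟨?_, sqCount_mul_sq two_pos hm, ?_, ?_⟩
  · exact sqCount_eq_zero fun d _ => mul_sq_ne_prime_mul_sq Nat.prime_two (by norm_num) hm.ne'
  · exact sqCount_eq_zero fun d hd h =>
      mul_sq_ne_prime_mul_sq Nat.prime_three (by norm_num) hd.ne' (h.symm : 2 * m ^ 2 = 3 * d ^ 2)
  · exact sqCount_eq_zero fun d hd h =>
      mul_sq_ne_prime_mul_sq Nat.prime_two (by norm_num) hd.ne' (by omega : 1 * m ^ 2 = 2 * d ^ 2)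

lemma sqCount_at_four_mul_sq {m : ℕ} (hm : 0 < m) :
    sqCount 1 (4 * m ^ 2) = 1 ∧ sqCount 2 (4 * m ^ 2) = 0 ∧ sqCount 3 (4 * m ^ 2) = 0 ∧
      sqCount 4 (4 * m ^ 2) = 1 := by
  refine ⟨?_, ?_, ?_, sqCount_mul_sq four_pos hm⟩
  · simpa [mul_pow] using sqCount_mul_sq one_pos (Nat.mul_pos two_pos hm)
  · exact sqCount_eq_zero fun d _ h =>
      mul_sq_ne_prime_mul_sq Nat.prime_two (by norm_num) hm.ne' (by omega : 1 * d ^ 2 = 2 * m ^ 2)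
  · exact sqCount_eq_zero fun d hd h =>
      mul_sq_ne_prime_mul_sq Nat.prime_three (by norm_num) hd.ne' (h.symm : 4 * m ^ 2 = 3 * d ^ 2)

lemma sqCount_at_three_mul_sq {m : ℕ} (hm : 0 < m) :
    sqCount 1 (3 * m ^ 2) = 0 ∧ sqCount 2 (3 * m ^ 2) = 0 ∧ sqCount 3 (3 * m ^ 2) = 1 ∧
      sqCount 4 (3 * m ^ 2) = 0 := by
  refine ⟨?_, ?_, sqCount_mul_sq three_pos hm, ?_⟩ <;>
    exact sqCount_eq_zero fun d _ => mul_sq_ne_prime_mul_sq Nat.prime_three (by norm_num) hm.ne'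

theorem stmt11 (k : ℕ) (hk : 0 < k) :
    ((∃ m : ℕ, 0 < m ∧ Odd m ∧ k = m ^ 2) → (384 * L4 k : ℤ) = C k - 8) ∧
    ((∃ m : ℕ, 0 < m ∧ (k = 2 * m ^ 2 ∨ k = 4 * m ^ 2)) → (384 * L4 k : ℤ) = C k - 24) ∧
    ((∃ m : ℕ, 0 < m ∧ k = 3 * m ^ 2) → (384 * L4 k : ℤ) = C k - 32) := by
  refine ⟨?_, ?_, ?_⟩
  · rintro ⟨m, -, hm, rfl⟩
    obtain ⟨h1, h2, h3, h4⟩ := sqCount_at_sq hm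
    rw [L4_eq_C_sub _ hk, h1, h2, h3, h4]
    norm_num
  · rintro ⟨m, hm, rfl | rfl⟩
    · obtain ⟨h1, h2, h3, h4⟩ := sqCount_at_two_mul_sq hm
      rw [L4_eq_C_sub _ hk, h1, h2, h3, h4]
      norm_num
    · obtain ⟨h1, h2, h3, h4⟩ := sqCount_at_four_mul_sq hm
      rw [L4_eq_C_sub _ hk, h1, h2, h3, h4]
      norm_num
  · rintro ⟨m, hm, rfl⟩
    obtain ⟨h1, h2, h3, h4⟩ := sqCount_at_three_mul_sq hm
    rw [L4_eq_C_sub _ hk, h1, h2, h3, h4]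
    norm_num
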